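/- arXiv:1910.04737 — 3 statements merged into one kernel-verified Lean document; each statement's English description precedes it below -/
import Mathlib

section
/- Let f : [a,b] → ℝ be a uniformly continuous function, extended continuously as needed so that v∧w + η lies in its domain, and suppose there exist constants C > 0 and η₀ > 0 such that for every η with 0 < η ≤ η₀ and all v < w in [a,b] with w - v ≤ η, one has |(f(w) - f(v))/(w - v) - (f(v∧w + η) - f(v∧w))/η| ≤ C√η. Then f is differentiable on [a,b], its derivative satisfies |f'(v) - (f(v+η) - f(v))/η| ≤ C√η for all 0 < η ≤ η₀ and v ∈ [a,b], and f' is continuous on [a,b] (i.e. f is C¹ on [a,b]). -/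
open Set Filter Topology

theorem c1_from_difference_quotients
    (a b : ℝ) (hab : a < b) (eta0 C : ℝ) (heta0 : 0 < eta0) (hC : 0 < C)
    (f : ℝ → ℝ)
    (hunif : UniformContinuousOn f (Icc a (b + eta0)))
    (hquot : ∀ eta : ℝ, 0 < eta → eta ≤ eta0 →
      ∀ v w : ℝ, a ≤ v → v < w → w ≤ b → w - v ≤ eta →
        |(f w - f v) / (w - v) - (f (v + eta) - f v) / eta| ≤ C * Real.sqrt eta) :
    ∃ f' : ℝ → ℝ,
      ContinuousOn f' (Icc a b) ∧
      ∀ v ∈ Icc a b,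
        HasDerivWithinAt f (f' v) (Icc a b) v ∧
        ∀ eta : ℝ, 0 < eta → eta ≤ eta0 →
          |f' v - (f (v + eta) - f v) / eta| ≤ C * Real.sqrt eta := by
  classical
  set g : ℝ → ℝ → ℝ := fun η v => (f (v + η) - f v) / η with hgdef
  have hcont : ContinuousOn f (Icc a (b + eta0)) := hunif.continuousOn
  -- Key estimate from hquot
  have K : ∀ η, 0 < η → η ≤ eta0 → ∀ η', 0 < η' → η' ≤ η → ∀ v, a ≤ v → v + η' ≤ b →
      |g η' v - g η v| ≤ C * Real.sqrt η := by
    intro η hη hηe η' hη' hle v hav hvb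
    have h := hquot η hη hηe v (v + η') hav (by linarith) hvb (by linarith)
    have e1 : v + η' - v = η' := by ring
    simpa [hgdef, e1] using h
  -- the approximating sequence scale at a point v ∈ [a,b)
  set δ : ℝ → ℕ → ℝ := fun v n => min eta0 (b - v) / 2 ^ (n + 1) with hδdef
  have h2pow : ∀ n : ℕ, (2:ℝ) ≤ 2 ^ (n + 1) := by
    intro n
    calc (2:ℝ) = 2 ^ 1 := by norm_num
      _ ≤ 2 ^ (n+1) := pow_le_pow_right₀ (by norm_num) (by omega)
  have hδpos : ∀ v, v < b → ∀ n, 0 < δ v n := by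
    intro v hv n
    have : (0:ℝ) < min eta0 (b - v) := lt_min heta0 (by linarith)
    rw [hδdef]; positivity
  have hδle : ∀ v, v < b → ∀ n, δ v n ≤ eta0 ∧ v + δ v n ≤ b := by
    intro v hv n
    have hm : (0:ℝ) < min eta0 (b - v) := lt_min heta0 (by linarith)
    have h1 : δ v n ≤ min eta0 (b - v) / 2 :=
      div_le_div_of_nonneg_left hm.le (by norm_num) (h2pow n)
    have h2 : min eta0 (b - v) ≤ eta0 := min_le_left _ _
    have h3 : min eta0 (b - v) ≤ b - v := min_le_right _ _
    constructor <;> linarith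
  have hδanti : ∀ v, v < b → ∀ m n : ℕ, m ≤ n → δ v n ≤ δ v m := by
    intro v hv m n hmn
    have hm : (0:ℝ) < min eta0 (b - v) := lt_min heta0 (by linarith)
    exact div_le_div_of_nonneg_left hm.le (by positivity)
      (pow_le_pow_right₀ (by norm_num) (by omega))
  have hδ0 : ∀ v, Tendsto (fun n => δ v n) atTop (𝓝 0) := by
    intro v
    have h2 : Tendsto (fun n : ℕ => (2:ℝ) ^ (n + 1)) atTop atTop :=
      (tendsto_pow_atTop_atTop_of_one_lt (by norm_num : (1:ℝ) < 2)).comp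
        (tendsto_add_atTop_nat 1)
    exact Tendsto.div_atTop tendsto_const_nhds h2
  -- existence of pointwise limit on [a, b)
  have hex : ∀ v, ∃ l, v ∈ Ico a b → Tendsto (fun n => g (δ v n) v) atTop (𝓝 l) := by
    intro v
    by_cases hv : v ∈ Ico a b
    · have hcs : CauchySeq (fun n => g (δ v n) v) := by
        rw [Metric.cauchySeq_iff']
        intro ε hε
        have htend : Tendsto (fun n => C * Real.sqrt (δ v n)) atTop (𝓝 0) := by
          have := ((hδ0 v).sqrt).const_mul C
          simpa using this
        have hev : ∀ᶠ n in atTop, C * Real.sqrt (δ v n) < ε :=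
          htend.eventually (eventually_lt_nhds hε)
        obtain ⟨N, hN⟩ := hev.exists_forall_of_atTop
        refine ⟨N, fun n hn => ?_⟩
        rw [Real.dist_eq]
        calc |g (δ v n) v - g (δ v N) v| ≤ C * Real.sqrt (δ v N) :=
              K (δ v N) (hδpos v hv.2 N) (hδle v hv.2 N).1 (δ v n) (hδpos v hv.2 n)
                (hδanti v hv.2 N n hn) v hv.1 (hδle v hv.2 n).2
          _ < ε := hN N le_rfl
      obtain ⟨l, hl⟩ := cauchySeq_tendsto_of_complete hcs
      exact ⟨l, fun _ => hl⟩
    · exact ⟨0, fun h => absurd h hv⟩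
  choose L0 hL0 using hex
  -- bound (a): |L0 v - g η v| ≤ C √η on [a,b)
  have hA : ∀ v ∈ Ico a b, ∀ η, 0 < η → η ≤ eta0 → |L0 v - g η v| ≤ C * Real.sqrt η := by
    intro v hv η hη hηe
    have hlim : Tendsto (fun n => |g (δ v n) v - g η v|) atTop (𝓝 |L0 v - g η v|) :=
      (((hL0 v hv).sub_const (g η v)).abs)
    apply le_of_tendsto hlim
    have hevsm : ∀ᶠ n in atTop, δ v n < η := (hδ0 v).eventually (eventually_lt_nhds hη)
    filter_upwards [hevsm] with n hn
    exact K η hη hηe (δ v n) (hδpos v hv.2 n) hn.le v hv.1 (hδle v hv.2 n).2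
  -- uniform continuity of L0 on [a,b)
  have hUC : ∀ ε > (0:ℝ), ∃ dd > (0:ℝ), ∀ x ∈ Ico a b, ∀ y ∈ Ico a b,
      |x - y| < dd → |L0 x - L0 y| ≤ ε := by
    intro ε hε
    set η := min eta0 ((ε / (4*C))^2) with hηdef
    have hηpos : 0 < η := lt_min heta0 (by positivity)
    have hηe : η ≤ eta0 := min_le_left _ _
    have hsq : C * Real.sqrt η ≤ ε/4 := by
      have h1 : Real.sqrt η ≤ Real.sqrt ((ε/(4*C))^2) := Real.sqrt_le_sqrt (min_le_right _ _)
      rw [Real.sqrt_sq (by positivity)] at h1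
      calc C * Real.sqrt η ≤ C * (ε/(4*C)) := by nlinarith [Real.sqrt_nonneg η]
        _ ≤ ε/4 := by rw [mul_div_assoc']; rw [div_le_div_iff₀ (by positivity) (by norm_num)]; ring_nf; nlinarith
    have hunif' := Metric.uniformContinuousOn_iff.1 hunif
    obtain ⟨dd, hdd, hud⟩ := hunif' (ε * η / 4) (by positivity)
    refine ⟨dd, hdd, fun x hx y hy hxy => ?_⟩
    have hxmem : x ∈ Icc a (b+eta0) := ⟨hx.1, by linarith [hx.2.le]⟩
    have hymem : y ∈ Icc a (b+eta0) := ⟨hy.1, by linarith [hy.2.le]⟩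
    have hxηmem : x + η ∈ Icc a (b+eta0) := ⟨by linarith [hx.1, hηpos.le], by linarith [hx.2.le]⟩
    have hyηmem : y + η ∈ Icc a (b+eta0) := ⟨by linarith [hy.1, hηpos.le], by linarith [hy.2.le]⟩
    have h1 := hud (x+η) hxηmem (y+η) hyηmem (by rw [Real.dist_eq]; simpa using hxy)
    have h2 := hud x hxmem y hymem (by rw [Real.dist_eq]; exact hxy)
    rw [Real.dist_eq] at h1 h2
    have hg2 : |g η x - g η y| ≤ ε/2 := by
      rw [hgdef]
      simp only [div_sub_div_same]
      rw [abs_div, abs_of_pos hηpos, div_le_iff₀ hηpos]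
      have htr : |f (x+η) - f x - (f (y+η) - f y)| ≤ |f (x+η) - f (y+η)| + |f x - f y| := by
        have := abs_sub (f (x+η) - f (y+η)) (f x - f y)
        have he : f (x+η) - f x - (f (y+η) - f y) = (f (x+η) - f (y+η)) - (f x - f y) := by ring
        rw [he]
        exact abs_sub _ _
      nlinarith
    have ht1 : |L0 x - L0 y| ≤ |L0 x - g η x| + |g η x - L0 y| := abs_sub_le _ _ _
    have ht2 : |g η x - L0 y| ≤ |g η x - g η y| + |g η y - L0 y| := abs_sub_le _ _ _
    have hb1 := hA x hx η hηpos hηe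
    have hb2 := hA y hy η hηpos hηe
    rw [abs_sub_comm] at hb2
    linarith
  -- the sequence approaching b
  set bs : ℕ → ℝ := fun n => b - (b - a) / 2 ^ (n + 1) with hbsdef
  have hbsmem : ∀ n, bs n ∈ Ico a b := by
    intro n
    have h1 : (b - a) / 2 ^ (n+1) ≤ (b - a) / 2 :=
      div_le_div_of_nonneg_left (by linarith) (by norm_num) (h2pow n)
    have h2 : (0:ℝ) < (b - a) / 2 ^ (n+1) := div_pos (by linarith) (by positivity)
    constructor <;> [skip; skip] <;> rw [hbsdef] <;> simp only <;> linarith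
  have hbstend : Tendsto bs atTop (𝓝 b) := by
    have h2 : Tendsto (fun n : ℕ => (2:ℝ) ^ (n + 1)) atTop atTop :=
      (tendsto_pow_atTop_atTop_of_one_lt (by norm_num : (1:ℝ) < 2)).comp
        (tendsto_add_atTop_nat 1)
    have := (Tendsto.div_atTop (tendsto_const_nhds (x := b - a)) h2).const_sub b
    simpa using this
  have hLbs : CauchySeq (fun n => L0 (bs n)) := by
    rw [Metric.cauchySeq_iff]
    intro ε hε
    obtain ⟨dd, hdd, hd⟩ := hUC (ε/2) (by linarith)
    have hc : CauchySeq bs := hbstend.cauchySeq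
    rw [Metric.cauchySeq_iff] at hc
    obtain ⟨N, hN⟩ := hc dd hdd
    refine ⟨N, fun m hm n hn => ?_⟩
    have := hd (bs m) (hbsmem m) (bs n) (hbsmem n) (by
      have := hN m hm n hn; rwa [Real.dist_eq] at this)
    rw [Real.dist_eq]
    linarith
  obtain ⟨Lb, hLb⟩ := cauchySeq_tendsto_of_complete hLbs
  set L : ℝ → ℝ := fun v => if v = b then Lb else L0 v with hLdef
  have hLeq : ∀ v ∈ Ico a b, L v = L0 v := by
    intro v hv
    rw [hLdef]; simp [ne_of_lt hv.2]
  -- bound (a) on all of [a,b]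
  have hbsIcc : ∀ n, bs n ∈ Icc a (b + eta0) :=
    fun n => ⟨(hbsmem n).1, by linarith [(hbsmem n).2.le]⟩
  have hbstendIn : Tendsto bs atTop (𝓝[Icc a (b+eta0)] b) :=
    tendsto_nhdsWithin_iff.2 ⟨hbstend, Eventually.of_forall hbsIcc⟩
  have hA' : ∀ v ∈ Icc a b, ∀ η, 0 < η → η ≤ eta0 → |L v - g η v| ≤ C * Real.sqrt η := by
    intro v hv η hη hηe
    rcases eq_or_lt_of_le hv.2 with hvb | hvb
    · rw [hvb]
      have hLv : L b = Lb := by simp [hLdef]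
      rw [hLv]
      have hfb : Tendsto (fun n => f (bs n)) atTop (𝓝 (f b)) :=
        ((hcont b ⟨hab.le, by linarith⟩).tendsto).comp hbstendIn
      have hfbη : Tendsto (fun n => f (bs n + η)) atTop (𝓝 (f (b + η))) := by
        have hmem : b + η ∈ Icc a (b + eta0) := ⟨by linarith, by linarith⟩
        have htin : Tendsto (fun n => bs n + η) atTop (𝓝[Icc a (b+eta0)] (b + η)) := by
          refine tendsto_nhdsWithin_iff.2 ⟨hbstend.add_const η, Eventually.of_forall fun n => ?_⟩
          exact ⟨by linarith [(hbsmem n).1, hη.le], by linarith [(hbsmem n).2.le]⟩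
        exact ((hcont (b+η) hmem).tendsto).comp htin
      have hgt : Tendsto (fun n => g η (bs n)) atTop (𝓝 (g η b)) := by
        rw [hgdef]
        exact (hfbη.sub hfb).div_const η
      have hlim : Tendsto (fun n => |L0 (bs n) - g η (bs n)|) atTop (𝓝 |Lb - g η b|) :=
        (hLb.sub hgt).abs
      exact le_of_tendsto hlim (Eventually.of_forall fun n => hA (bs n) (hbsmem n) η hη hηe)
    · rw [hLeq v ⟨hv.1, hvb⟩]
      exact hA v ⟨hv.1, hvb⟩ η hη hηe
  -- uniform continuity of L on [a,b]
  have hUC' : ∀ ε > (0:ℝ), ∃ dd > (0:ℝ), ∀ x ∈ Icc a b, ∀ y ∈ Icc a b,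
      |x - y| < dd → |L x - L y| ≤ ε := by
    intro ε hε
    obtain ⟨dd, hdd, hd⟩ := hUC ε hε
    have haux : ∀ x ∈ Ico a b, |x - b| < dd/2 → |L0 x - Lb| ≤ ε := by
      intro x hx hxb
      have hev : ∀ᶠ n in atTop, |b - bs n| < dd/2 := by
        have := hbstend.const_sub b
        simp only [sub_self] at this
        have h0 := this.abs
        simp only [abs_zero] at h0
        exact h0.eventually (eventually_lt_nhds (by linarith))
      have hlim : Tendsto (fun n => |L0 x - L0 (bs n)|) atTop (𝓝 |L0 x - Lb|) :=
        ((tendsto_const_nhds.sub hLb).abs)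
      apply le_of_tendsto hlim
      filter_upwards [hev] with n hn
      refine hd x hx (bs n) (hbsmem n) ?_
      calc |x - bs n| ≤ |x - b| + |b - bs n| := abs_sub_le _ _ _
        _ < dd := by linarith
    refine ⟨dd/2, by linarith, fun x hx y hy hxy => ?_⟩
    rcases eq_or_lt_of_le hx.2 with hxb | hxb <;> rcases eq_or_lt_of_le hy.2 with hyb | hyb
    · subst hxb; subst hyb; simpa using hε.le
    · subst hxb
      rw [hLdef]
      simp only [if_pos rfl, if_neg (ne_of_lt hyb)]
      rw [abs_sub_comm]
      exact haux y ⟨hy.1, hyb⟩ (by rw [abs_sub_comm] at hxy; exact hxy)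
    · subst hyb
      rw [hLdef]
      simp only [if_pos rfl, if_neg (ne_of_lt hxb)]
      exact haux x ⟨hx.1, hxb⟩ hxy
    · rw [hLeq x ⟨hx.1, hxb⟩, hLeq y ⟨hy.1, hyb⟩]
      exact hd x ⟨hx.1, hxb⟩ y ⟨hy.1, hyb⟩ (by linarith [hxy])
  refine ⟨L, ?_, ?_⟩
  · -- continuity
    rw [Metric.continuousOn_iff]
    intro x hx ε hε
    obtain ⟨dd, hdd, hd⟩ := hUC' (ε/2) (by linarith)
    refine ⟨dd, hdd, fun y hy hxy => ?_⟩
    rw [Real.dist_eq]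
    have := hd y hy x hx (by rwa [Real.dist_eq] at hxy)
    linarith
  · intro v hv
    constructor
    · -- derivative
      rw [hasDerivWithinAt_iff_tendsto_slope]
      rw [Metric.tendsto_nhdsWithin_nhds]
      intro ε hε
      obtain ⟨d1, hd1, hd⟩ := hUC' (ε/4) (by linarith)
      set d2 := min eta0 ((ε/(2*C))^2) with hd2def
      have hd2pos : 0 < d2 := lt_min heta0 (by positivity)
      have hd2sq : C * Real.sqrt d2 ≤ ε/2 := by
        have h1 : Real.sqrt d2 ≤ Real.sqrt ((ε/(2*C))^2) := Real.sqrt_le_sqrt (min_le_right _ _)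
        rw [Real.sqrt_sq (by positivity)] at h1
        calc C * Real.sqrt d2 ≤ C * (ε/(2*C)) := by nlinarith [Real.sqrt_nonneg d2]
          _ ≤ ε/2 := by
            rw [mul_div_assoc', div_le_div_iff₀ (by positivity) (by norm_num)]
            nlinarith
      refine ⟨min d1 d2, lt_min hd1 hd2pos, fun w hw hwv => ?_⟩
      obtain ⟨hwmem, hwne⟩ := hw
      rw [mem_singleton_iff] at hwne
      rw [Real.dist_eq] at hwv ⊢
      have hwd1 : |w - v| < d1 := lt_of_lt_of_le hwv (min_le_left _ _)
      have hwd2 : |w - v| < d2 := lt_of_lt_of_le hwv (min_le_right _ _)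
      rw [abs_sub_lt_iff] at hwd2
      have hslope : slope f v w = (f w - f v) / (w - v) := slope_def_field f v w
      rcases lt_or_gt_of_ne hwne with hlt | hgt
      · have hη' : 0 < v - w := by linarith
        have hηe' : v - w ≤ eta0 := le_trans hwd2.2.le (min_le_left _ _)
        have hgw : slope f v w = g (v - w) w := by
          rw [hslope, hgdef]
          simp only
          rw [show w + (v - w) = v by ring]
          rw [← neg_div_neg_eq, neg_sub, neg_sub]
        have h1 : |g (v - w) w - L w| ≤ C * Real.sqrt (v - w) := by
          rw [abs_sub_comm]; exact hA' w hwmem _ hη' hηe'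
        have h2 : |L w - L v| ≤ ε/4 := hd w hwmem v hv hwd1
        have h3 : C * Real.sqrt (v - w) ≤ C * Real.sqrt d2 :=
          mul_le_mul_of_nonneg_left (Real.sqrt_le_sqrt hwd2.2.le) hC.le
        calc |slope f v w - L v| ≤ |slope f v w - L w| + |L w - L v| := abs_sub_le _ _ _
          _ ≤ C * Real.sqrt d2 + ε/4 := by rw [hgw]; linarith
          _ < ε := by linarith
      · have hη' : 0 < w - v := by linarith
        have hηe' : w - v ≤ eta0 := le_trans hwd2.1.le (min_le_left _ _)
        have hgw : slope f v w = g (w - v) v := by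
          rw [hslope, hgdef]
          simp only
          rw [show v + (w - v) = w by ring]
        rw [hgw, abs_sub_comm]
        calc |L v - g (w - v) v| ≤ C * Real.sqrt (w - v) := hA' v hv _ hη' hηe'
          _ ≤ C * Real.sqrt d2 :=
            mul_le_mul_of_nonneg_left (Real.sqrt_le_sqrt hwd2.1.le) hC.le
          _ < ε := by linarith
    · intro η hη hηe
      exact hA' v hv η hη hηe
end

section
/- Let η̃ : ℝ → ℝ be C¹ with η̃' bounded and uniformly continuous. Then the map Ã : D¹(ℝ^d) → ℝ, Ã(φ) = ⨍_D η̃(√u + φ) dz, is continuously Fréchet differentiable, with differential Ã'(φ)ψ = ⨍_D η̃'(√u + φ) ψ dz. -/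
/-!
The derivative at `φ` is the pairing with `η̃'(√u + φ) ∈ L²`. Since `η̃'` is bounded and
uniformly continuous, for every `ε > 0` there is `C` with `|η̃' s - η̃' t| ≤ ε + C |s - t|`
(uniform continuity for close points, boundedness for distant ones). Integrated over the
probability space, this gives `‖η̃'(√u + φ) - η̃'(√u + φ')‖₂ ≤ ε + C ‖φ - φ'‖₂`, hence continuity
of the derivative, and, with the mean value theorem, the remainder bound
`|Γ| ≤ ε ‖ψ‖₁ + C ‖ψ‖₂² ≤ ε ‖ψ‖₂ + C ‖ψ‖₂²`, hence Fréchet differentiability.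
-/

open MeasureTheory Filter Set Metric Topology Asymptotics
open scoped ENNReal BoundedContinuousFunction

section MetricEstimates

variable {X Y : Type*} [PseudoMetricSpace X] [PseudoMetricSpace Y] {f : X → Y}

theorem UniformContinuous.exists_dist_le_add_mul (hf : UniformContinuous f)
    (hb : Bornology.IsBounded (range f)) {ε : ℝ} (hε : 0 < ε) :
    ∃ C, 0 ≤ C ∧ ∀ x y, dist (f x) (f y) ≤ ε + C * dist x y := by
  obtain ⟨ρ, hρ, hfρ⟩ := Metric.uniformContinuous_iff.mp hf ε hε
  obtain ⟨B, hB0, hB⟩ : ∃ B, 0 ≤ B ∧ ∀ x y, dist (f x) (f y) ≤ B := by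
    obtain ⟨B, hB⟩ := isBounded_range_iff.mp hb
    exact ⟨max B 0, le_max_right _ _, fun x y => (hB x y).trans (le_max_left _ _)⟩
  refine ⟨B / ρ, by positivity, fun x y => ?_⟩
  rcases lt_or_ge (dist x y) ρ with hxy | hxy
  · have := (hfρ hxy).le
    have : 0 ≤ B / ρ * dist x y := by positivity
    linarith
  · calc dist (f x) (f y) ≤ B := hB x y
      _ ≤ B / ρ * dist x y := by
        rw [div_mul_eq_mul_div, le_div_iff₀ hρ]
        exact mul_le_mul_of_nonneg_left hxy hB0
      _ ≤ ε + B / ρ * dist x y := by linarith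

theorem uniformContinuous_of_forall_dist_le_add_mul
    (h : ∀ ε > 0, ∃ C, 0 ≤ C ∧ ∀ x y, dist (f x) (f y) ≤ ε + C * dist x y) :
    UniformContinuous f := by
  refine Metric.uniformContinuous_iff.mpr fun ε hε => ?_
  obtain ⟨C, hC, hfC⟩ := h (ε / 2) (half_pos hε)
  refine ⟨ε / 2 / (C + 1), by positivity, fun {x y} hxy => ?_⟩
  calc dist (f x) (f y) ≤ ε / 2 + C * dist x y := hfC x y
    _ ≤ ε / 2 + (C + 1) * dist x y := by gcongr; linarith
    _ < ε / 2 + (C + 1) * (ε / 2 / (C + 1)) := by gcongr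
    _ = ε := by field_simp; ring

end MetricEstimates

theorem isLittleO_of_forall_norm_le_mul_add_mul_sq {E F : Type*} [SeminormedAddCommGroup E]
    [SeminormedAddCommGroup F] {r : E → F}
    (h : ∀ ε > 0, ∃ C, 0 ≤ C ∧ ∀ x, ‖r x‖ ≤ ε * ‖x‖ + C * ‖x‖ ^ 2) :
    r =o[𝓝 0] fun x => x := by
  refine isLittleO_iff.mpr fun ε hε => ?_
  obtain ⟨C, hC, hrC⟩ := h (ε / 2) (half_pos hε)
  filter_upwards [ball_mem_nhds (0 : E) (show 0 < ε / 2 / (C + 1) by positivity)] with x hx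
  rw [mem_ball_zero_iff, lt_div_iff₀ (by positivity)] at hx
  calc ‖r x‖ ≤ ε / 2 * ‖x‖ + C * ‖x‖ * ‖x‖ := by rw [mul_assoc, ← sq]; exact hrC x
    _ ≤ ε / 2 * ‖x‖ + ε / 2 * ‖x‖ := by gcongr; nlinarith [norm_nonneg x]
    _ = ε * ‖x‖ := by ring

theorem abs_sub_sub_mul_le_of_hasDerivAt {η η' : ℝ → ℝ} (hη : ∀ s, HasDerivAt η (η' s) s)
    {ε C : ℝ} (hC : 0 ≤ C) (hη' : ∀ s t, dist (η' s) (η' t) ≤ ε + C * dist s t) (a t : ℝ) :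
    |η (a + t) - η a - η' a * t| ≤ (ε + C * |t|) * |t| := by
  have hderiv : ∀ s, HasDerivAt (fun s => η s - η' a * s) (η' s - η' a) s := fun s =>
    (hη s).sub (by simpa using (hasDerivAt_id s).const_mul (η' a))
  have hmvt := (convex_closedBall a |t|).norm_image_sub_le_of_norm_hasDerivWithin_le
    (C := ε + C * |t|) (fun s _ => (hderiv s).hasDerivWithinAt) (fun s hs => ?_)
    (mem_closedBall_self (abs_nonneg t)) (show a + t ∈ closedBall a |t| by simp)
  · rw [show η (a + t) - η a - η' a * t = (η (a + t) - η' a * (a + t)) - (η a - η' a * a) by ring]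
    simpa [Real.norm_eq_abs] using hmvt
  · rw [mem_closedBall] at hs
    rw [Real.norm_eq_abs, ← Real.dist_eq]
    exact (hη' s a).trans (by gcongr)

namespace MeasureTheory

variable {α E F : Type*} [MeasurableSpace α] {μ : Measure α} {p : ℝ≥0∞}
  [NormedAddCommGroup E] [NormedAddCommGroup F]

theorem Lp.norm_le_add_mul_of_ae_le [IsProbabilityMeasure μ] [Fact (1 ≤ p)]
    {f : Lp E p μ} {g : Lp F p μ} {ε C : ℝ} (hε : 0 ≤ ε) (hC : 0 ≤ C)
    (h : ∀ᵐ x ∂μ, ‖f x‖ ≤ ε + C * ‖g x‖) : ‖f‖ ≤ ε + C * ‖g‖ := by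
  have hp : p ≠ 0 := (zero_lt_one.trans_le Fact.out).ne'
  have hg := Lp.eLpNorm_ne_top g
  have hconst : eLpNorm (fun _ : α => ε) p μ = ENNReal.ofReal ε := by
    simp [eLpNorm_const _ hp (NeZero.ne μ), Real.enorm_eq_ofReal hε]
  have hmul : eLpNorm (fun x => C * ‖g x‖) p μ = ENNReal.ofReal C * eLpNorm g p μ := by
    rw [← Real.enorm_eq_ofReal hC, ← eLpNorm_norm (f := g), ← eLpNorm_const_smul]
    rfl
  have hle : eLpNorm f p μ ≤ ENNReal.ofReal ε + ENNReal.ofReal C * eLpNorm g p μ :=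
    calc eLpNorm f p μ ≤ eLpNorm (fun x => ε + C * ‖g x‖) p μ := eLpNorm_mono_ae_real h
      _ ≤ eLpNorm (fun _ : α => ε) p μ + eLpNorm (fun x => C * ‖g x‖) p μ :=
        eLpNorm_add_le aestronglyMeasurable_const
          ((Lp.aestronglyMeasurable g).norm.const_mul C) Fact.out
      _ = _ := by rw [hconst, hmul]
  rw [Lp.norm_def, Lp.norm_def]
  calc (eLpNorm f p μ).toReal ≤ (ENNReal.ofReal ε + ENNReal.ofReal C * eLpNorm g p μ).toReal :=
        ENNReal.toReal_mono (by finiteness) hle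
    _ = ε + C * (eLpNorm g p μ).toReal := by
      rw [ENNReal.toReal_add (by finiteness) (by finiteness),
        ENNReal.toReal_mul, ENNReal.toReal_ofReal hε, ENNReal.toReal_ofReal hC]

theorem Lp.integral_norm_le_norm [IsProbabilityMeasure μ] [Fact (1 ≤ p)] (f : Lp E p μ) :
    ∫ x, ‖f x‖ ∂μ ≤ ‖f‖ := by
  rw [integral_norm_eq_lintegral_enorm (Lp.aestronglyMeasurable f),
    ← eLpNorm_one_eq_lintegral_enorm, Lp.norm_def]
  exact ENNReal.toReal_mono (Lp.eLpNorm_ne_top f)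
    (eLpNorm_le_eLpNorm_of_exponent_le Fact.out (Lp.aestronglyMeasurable f))

theorem L2.integral_norm_sq_eq_norm_sq {G : Type*} [NormedAddCommGroup G] [InnerProductSpace ℝ G]
    (f : Lp G 2 μ) : ∫ x, ‖f x‖ ^ 2 ∂μ = ‖f‖ ^ 2 := by
  simp only [← real_inner_self_eq_norm_sq, L2.inner_def]

theorem _root_.LipschitzWith.integrable_comp [IsFiniteMeasure μ] [Fact (1 ≤ p)] {K : NNReal}
    {η : E → F} (hη : LipschitzWith K η) (f : Lp E p μ) : Integrable (fun x => η (f x)) μ := by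
  refine ((integrable_const ‖η 0‖).add
    (((Lp.memLp f).integrable Fact.out).norm.const_mul K)).mono'
    (hη.continuous.comp_aestronglyMeasurable (Lp.aestronglyMeasurable f))
    (Eventually.of_forall fun x => ?_)
  have := hη.dist_le_mul (f x) 0
  rw [dist_eq_norm, dist_eq_norm, sub_zero] at this
  have := norm_sub_norm_le (η (f x)) (η 0)
  simp only [Pi.add_apply]
  linarith

end MeasureTheory

namespace BoundedContinuousFunction

variable {α E F : Type*} [MeasurableSpace α] {μ : Measure α} {p : ℝ≥0∞}
  [NormedAddCommGroup E] [NormedAddCommGroup F]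

noncomputable def compLp [IsFiniteMeasure μ] (g : E →ᵇ F) (f : Lp E p μ) : Lp F p μ :=
  (MemLp.of_bound (g.continuous.comp_aestronglyMeasurable (Lp.aestronglyMeasurable f)) ‖g‖
    (Eventually.of_forall fun x => g.norm_coe_le_norm (f x))).toLp (g ∘ f)

theorem coeFn_compLp [IsFiniteMeasure μ] (g : E →ᵇ F) (f : Lp E p μ) : g.compLp f =ᵐ[μ] g ∘ f :=
  MemLp.coeFn_toLp _

theorem norm_compLp_sub_le [IsProbabilityMeasure μ] [Fact (1 ≤ p)] {g : E →ᵇ F} {ε C : ℝ}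
    (hε : 0 ≤ ε) (hC : 0 ≤ C) (hg : ∀ s t, dist (g s) (g t) ≤ ε + C * dist s t)
    (f f' : Lp E p μ) : ‖g.compLp f - g.compLp f'‖ ≤ ε + C * ‖f - f'‖ := by
  refine Lp.norm_le_add_mul_of_ae_le hε hC ?_
  filter_upwards [g.coeFn_compLp f, g.coeFn_compLp f', Lp.coeFn_sub (g.compLp f) (g.compLp f'),
    Lp.coeFn_sub f f'] with x h₁ h₂ h₃ h₄
  simpa only [h₁, h₂, h₃, h₄, ← dist_eq_norm, Pi.sub_apply, Function.comp_apply] using hg _ _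

theorem uniformContinuous_compLp [IsProbabilityMeasure μ] [Fact (1 ≤ p)] {g : E →ᵇ F}
    (hg : UniformContinuous g) : UniformContinuous (g.compLp : Lp E p μ → Lp F p μ) := by
  refine uniformContinuous_of_forall_dist_le_add_mul fun ε hε => ?_
  obtain ⟨C, hC, hgC⟩ := hg.exists_dist_le_add_mul g.isBounded_range hε
  exact ⟨C, hC, fun f f' => by
    simpa only [dist_eq_norm] using norm_compLp_sub_le hε.le hC hgC f f'⟩

theorem inner_compLp [IsFiniteMeasure μ] (g : ℝ →ᵇ ℝ) (f ψ : Lp ℝ 2 μ) :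
    inner ℝ (g.compLp f) ψ = ∫ x, g (f x) * ψ x ∂μ := by
  rw [L2.inner_def]
  refine integral_congr_ae ?_
  filter_upwards [g.coeFn_compLp f] with x hx
  simp only [hx, Function.comp_apply, Real.inner_apply]

end BoundedContinuousFunction

section IntegralFunctional

variable {α : Type*} [MeasurableSpace α] {μ : Measure α} [IsProbabilityMeasure μ]
  {η : ℝ → ℝ} {η' : ℝ →ᵇ ℝ}

theorem norm_integral_comp_add_sub_sub_le (hη : ∀ s, HasDerivAt η (η' s) s) {ε C : ℝ}
    (hε : 0 ≤ ε) (hC : 0 ≤ C) (hη' : ∀ s t, dist (η' s) (η' t) ≤ ε + C * dist s t)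
    (f ψ : Lp ℝ 2 μ) :
    ‖∫ x, η ((f + ψ) x) ∂μ - ∫ x, η (f x) ∂μ - innerSL ℝ (η'.compLp f) ψ‖ ≤
      ε * ‖ψ‖ + C * ‖ψ‖ ^ 2 := by
  have hlip : LipschitzWith ‖η'‖₊ η := lipschitzOnWith_univ.1 <|
    convex_univ.lipschitzOnWith_of_nnnorm_hasDerivWithin_le (fun s _ => (hη s).hasDerivWithinAt)
      fun s _ => η'.nnnorm_coe_le_nnnorm s
  have hψ₁ : Integrable (fun x => ‖ψ x‖) μ := ((Lp.memLp ψ).integrable one_le_two).norm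
  have hψ₂ : Integrable (fun x => ‖ψ x‖ ^ 2) μ := (Lp.memLp ψ).integrable_norm_pow two_ne_zero
  have hremainder : ∫ x, η ((f + ψ) x) ∂μ - ∫ x, η (f x) ∂μ - innerSL ℝ (η'.compLp f) ψ =
      ∫ x, (η (f x + ψ x) - η (f x) - η' (f x) * ψ x) ∂μ := by
    have hadd : (fun x => η ((f + ψ) x)) =ᵐ[μ] fun x => η (f x + ψ x) := by
      filter_upwards [Lp.coeFn_add f ψ] with x hx
      rw [hx, Pi.add_apply]
    have hint := (hlip.integrable_comp (f + ψ)).congr hadd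
    have hmul : Integrable (fun x => η' (f x) * ψ x) μ := by
      refine (L2.integrable_inner (𝕜 := ℝ) (η'.compLp f) ψ).congr ?_
      filter_upwards [η'.coeFn_compLp f] with x hx
      simp only [hx, Function.comp_apply, Real.inner_apply]
    rw [integral_congr_ae hadd, innerSL_apply_apply, η'.inner_compLp,
      integral_sub (by exact hint.sub (hlip.integrable_comp f)) hmul,
      integral_sub hint (hlip.integrable_comp f)]
  have hpointwise : ∀ x, ‖η (f x + ψ x) - η (f x) - η' (f x) * ψ x‖ ≤
      ε * ‖ψ x‖ + C * ‖ψ x‖ ^ 2 := fun x => by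
    rw [Real.norm_eq_abs, Real.norm_eq_abs]
    linarith [abs_sub_sub_mul_le_of_hasDerivAt hη hC hη' (f x) (ψ x)]
  calc _ = ‖∫ x, (η (f x + ψ x) - η (f x) - η' (f x) * ψ x) ∂μ‖ := by rw [hremainder]
    _ ≤ ∫ x, (ε * ‖ψ x‖ + C * ‖ψ x‖ ^ 2) ∂μ :=
      norm_integral_le_of_norm_le ((hψ₁.const_mul ε).add (hψ₂.const_mul C))
        (Eventually.of_forall hpointwise)
    _ = ε * ∫ x, ‖ψ x‖ ∂μ + C * ‖ψ‖ ^ 2 := by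
      rw [integral_add (hψ₁.const_mul ε) (hψ₂.const_mul C), integral_const_mul, integral_const_mul,
        L2.integral_norm_sq_eq_norm_sq]
    _ ≤ ε * ‖ψ‖ + C * ‖ψ‖ ^ 2 := by gcongr; exact Lp.integral_norm_le_norm ψ

theorem hasFDerivAt_integral_comp (hη : ∀ s, HasDerivAt η (η' s) s) (hη' : UniformContinuous η')
    (f : Lp ℝ 2 μ) :
    HasFDerivAt (fun g : Lp ℝ 2 μ => ∫ x, η (g x) ∂μ) (innerSL ℝ (η'.compLp f)) f := by
  rw [hasFDerivAt_iff_isLittleO_nhds_zero]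
  refine isLittleO_of_forall_norm_le_mul_add_mul_sq fun ε hε => ?_
  obtain ⟨C, hC, hη'C⟩ := hη'.exists_dist_le_add_mul η'.isBounded_range hε
  exact ⟨C, hC, norm_integral_comp_add_sub_sub_le hη hε.le hC hη'C f⟩

end IntegralFunctional

theorem Atilde_c1_frechet_general
    (α : Type*) [MeasurableSpace α] (μ : Measure α) [IsProbabilityMeasure μ]
    (eta : ℝ → ℝ) (heta : ContDiff ℝ 1 eta)
    (K : ℝ) (hK : ∀ x : ℝ, |deriv eta x| ≤ K)
    (hucont : UniformContinuous (deriv eta))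
    (u : ℝ) :
    ∃ A' : Lp ℝ 2 μ → (Lp ℝ 2 μ →L[ℝ] ℝ),
      Continuous A' ∧
      ∀ f : Lp ℝ 2 μ,
        HasFDerivAt (fun g : Lp ℝ 2 μ => ∫ x, eta (Real.sqrt u + g x) ∂μ) (A' f) f ∧
        ∀ ψ : Lp ℝ 2 μ, A' f ψ = ∫ x, deriv eta (Real.sqrt u + f x) * ψ x ∂μ := by
  have hshift : UniformContinuous fun s => deriv eta (Real.sqrt u + s) :=
    hucont.comp (uniformContinuous_add_left _)
  let η' : ℝ →ᵇ ℝ := .ofNormedAddCommGroup _ hshift.continuous K fun s => hK _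
  have hη : ∀ s, HasDerivAt (fun s => eta (Real.sqrt u + s)) (η' s) s := fun s =>
    ((heta.differentiable one_ne_zero _).hasDerivAt).comp_const_add _ s
  exact ⟨fun f => innerSL ℝ (η'.compLp f),
    (innerSL ℝ).continuous.comp (η'.uniformContinuous_compLp hshift).continuous,
    fun f => ⟨hasFDerivAt_integral_comp hη hshift f, η'.inner_compLp f⟩⟩

theorem Atilde_c1_frechet
    (α : Type*) [MeasurableSpace α] (μ : Measure α) [IsProbabilityMeasure μ]
    (eta : ℝ → ℝ) (heta : ContDiff ℝ 1 eta)
    (K : ℝ) (hK : ∀ x : ℝ, |deriv eta x| ≤ K)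
    (hucont : UniformContinuous (deriv eta))
    (u : ℝ) (hu : 0 ≤ u) :
    ∃ A' : Lp ℝ 2 μ → (Lp ℝ 2 μ →L[ℝ] ℝ),
      Continuous A' ∧
      ∀ f : Lp ℝ 2 μ,
        HasFDerivAt (fun g : Lp ℝ 2 μ => ∫ x, eta (Real.sqrt u + g x) ∂μ) (A' f) f ∧
        ∀ ψ : Lp ℝ 2 μ, A' f ψ = ∫ x, deriv eta (Real.sqrt u + f x) * ψ x ∂μ :=
  Atilde_c1_frechet_general α μ eta heta K hK hucont u
end

section
/- Suppose φ̃ ∈ D¹(ℝ^d), φ̃ ≥ 0, satisfies the integral equation φ̃ = λ̃ G(η̃'(√u + φ̃) 1_D) with λ̃ > 0, where G is convolution with the Green function c_d|·|^{-(d-2)} of (1/2d)Δ, η̃' is bounded with inf_{[√u,∞)} η̃' > 0, and D is compact with positive measure. If ν - θ = ⨍_D (η̃(√u + φ̃) - η̃(√u)) dz, then c'(ν - θ) ≤ λ̃ ≤ c(ν - θ), where c' = (‖η̃'‖²_∞ ⨍_D G(1_D) dz)^{-1} and c = ((inf_{[√u,∞)} η̃')² ⨍_D G(1_D) dz)^{-1}.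 -/
open MeasureTheory Filter Set
open scoped ENNReal

lemma riesz_integrableOn_closedBall (d : ℕ) (hd : 3 ≤ d) (r : ℝ) :
    IntegrableOn (fun y : EuclideanSpace ℝ (Fin d) => ‖y‖ ^ (-((d : ℝ) - 2)))
      (Metric.closedBall 0 r) volume := by
  set E := EuclideanSpace ℝ (Fin d)
  set s : ℝ := (d : ℝ) - 2 with hs
  have hd3 : (3 : ℝ) ≤ (d : ℝ) := by exact_mod_cast hd
  have hs0 : 0 < s := by simp only [hs]; linarith
  have hsd : s < d := by simp only [hs]; linarith
  have hmono : Metric.closedBall (0 : E) r ⊆ Metric.closedBall 0 (max r 1) :=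
    Metric.closedBall_subset_closedBall (le_max_left _ _)
  refine IntegrableOn.mono_set ?_ hmono
  set R : ℝ := max r 1 with hR
  have hRpos : (0 : ℝ) < R := lt_of_lt_of_le one_pos (le_max_right _ _)
  have hmeas : Measurable (fun y : E => ‖y‖ ^ (-s)) := by fun_prop
  constructor
  · exact hmeas.aestronglyMeasurable
  · rw [HasFiniteIntegral]
    have hnn : ∀ y : E, 0 ≤ ‖y‖ ^ (-s) := fun y => Real.rpow_nonneg (norm_nonneg _) _
    rw [lintegral_enorm_of_nonneg hnn]
    set μ := volume.restrict (Metric.closedBall (0 : EuclideanSpace ℝ (Fin d)) R) with hμ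
    have hfin : μ univ < ⊤ := by
      rw [hμ, Measure.restrict_apply_univ]
      exact (ProperSpace.isCompact_closedBall _ _).measure_lt_top
    rw [show ∫⁻ (y : E) in Metric.closedBall 0 R, ENNReal.ofReal (‖y‖ ^ (-s)) ∂volume
        = ∫⁻ y, ENNReal.ofReal (‖y‖ ^ (-s)) ∂μ from rfl]
    rw [lintegral_eq_lintegral_meas_le μ (Eventually.of_forall hnn) hmeas.aemeasurable]
    have key : ∀ t : ℝ, 0 < t →
        {a : E | t ≤ ‖a‖ ^ (-s)} ⊆ Metric.closedBall 0 (t ^ (-s)⁻¹) := by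
      intro t ht a ha
      simp only [mem_setOf_eq] at ha
      rcases eq_or_ne a 0 with h0 | h0
      · exfalso
        rw [h0] at ha
        simp only [norm_zero] at ha
        rw [Real.zero_rpow (show -s ≠ 0 by intro h; rw [neg_eq_zero] at h; linarith)] at ha
        linarith
      · have hna : 0 < ‖a‖ := norm_pos_iff.mpr h0
        rw [Metric.mem_closedBall, dist_zero_right]
        exact (Real.le_rpow_inv_iff_of_neg hna ht (by linarith)).mpr ha
    -- split the outer integral at 1
    calc ∫⁻ t in Ioi (0:ℝ), μ {a | t ≤ ‖a‖ ^ (-s)}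
        ≤ ∫⁻ t in Ioc (0:ℝ) 1 ∪ Ioi 1, μ {a | t ≤ ‖a‖ ^ (-s)} :=
          lintegral_mono_set Ioi_subset_Ioc_union_Ioi
      _ ≤ (∫⁻ t in Ioc (0:ℝ) 1, μ {a | t ≤ ‖a‖ ^ (-s)})
            + ∫⁻ t in Ioi (1:ℝ), μ {a | t ≤ ‖a‖ ^ (-s)} := lintegral_union_le _ _ _
      _ < ⊤ := by
          refine ENNReal.add_lt_top.2 ⟨?_, ?_⟩
          · calc ∫⁻ t in Ioc (0:ℝ) 1, μ {a | t ≤ ‖a‖ ^ (-s)}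
                ≤ ∫⁻ _ in Ioc (0:ℝ) 1, μ univ := by
                  refine lintegral_mono fun t => measure_mono (subset_univ _)
              _ = μ univ * volume (Ioc (0:ℝ) 1) := by
                  rw [setLIntegral_const]
              _ < ⊤ := by
                  refine ENNReal.mul_lt_top hfin ?_
                  simp [Real.volume_Ioc]
          · have hb : ∀ t ∈ Ioi (1:ℝ), μ {a | t ≤ ‖a‖ ^ (-s)}
                ≤ ENNReal.ofReal (t ^ (-((d:ℝ)/s))) * volume (Metric.ball (0:E) 1) := by
              intro t ht
              have ht0 : (0:ℝ) < t := lt_trans one_pos ht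
              have h1 : μ {a | t ≤ ‖a‖ ^ (-s)} ≤ volume (Metric.closedBall (0:E) (t ^ (-s)⁻¹)) := by
                exact le_trans (Measure.restrict_apply_le _ _) (measure_mono (key t ht0))
              have h2 : volume (Metric.closedBall (0:E) (t ^ (-s)⁻¹))
                  = ENNReal.ofReal ((t ^ (-s)⁻¹) ^ d) * volume (Metric.ball (0:E) 1) := by
                rw [Measure.addHaar_closedBall _ _ (Real.rpow_nonneg ht0.le _)]
                rw [finrank_euclideanSpace_fin]
              have h3 : (t ^ (-s)⁻¹) ^ d = t ^ (-((d:ℝ)/s)) := by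
                rw [← Real.rpow_natCast (t ^ (-s)⁻¹) d, ← Real.rpow_mul ht0.le]
                congr 1
                field_simp
              calc μ {a | t ≤ ‖a‖ ^ (-s)} ≤ _ := h1
                _ = _ := by rw [h2, h3]
            calc ∫⁻ t in Ioi (1:ℝ), μ {a | t ≤ ‖a‖ ^ (-s)}
                ≤ ∫⁻ t in Ioi (1:ℝ),
                    ENNReal.ofReal (t ^ (-((d:ℝ)/s))) * volume (Metric.ball (0:E) 1) :=
                  setLIntegral_mono' measurableSet_Ioi hb
              _ = (∫⁻ t in Ioi (1:ℝ), ENNReal.ofReal (t ^ (-((d:ℝ)/s))))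
                    * volume (Metric.ball (0:E) 1) := by
                  rw [lintegral_mul_const' _ _ measure_ball_lt_top.ne]
              _ < ⊤ := by
                  refine ENNReal.mul_lt_top ?_ measure_ball_lt_top
                  have hint : IntegrableOn (fun t : ℝ => t ^ (-((d:ℝ)/s))) (Ioi 1) volume := by
                    refine integrableOn_Ioi_rpow_of_lt ?_ one_pos
                    rw [neg_lt_neg_iff]
                    rw [lt_div_iff₀ hs0]
                    linarith
                  exact hint.setLIntegral_lt_top

lemma riesz_integrableOn_sub (d : ℕ) (hd : 3 ≤ d) (x : EuclideanSpace ℝ (Fin d)) (r : ℝ) :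
    IntegrableOn (fun y : EuclideanSpace ℝ (Fin d) => ‖x - y‖ ^ (-((d : ℝ) - 2)))
      (Metric.closedBall x r) volume := by
  set g : EuclideanSpace ℝ (Fin d) → ℝ := (Metric.closedBall (0 : EuclideanSpace ℝ (Fin d)) r).indicator
      (fun w => ‖w‖ ^ (-((d : ℝ) - 2))) with hg
  have hgint : Integrable g volume :=
    (integrable_indicator_iff measurableSet_closedBall).mpr
      (riesz_integrableOn_closedBall d hd r)
  have h2 : (fun y : EuclideanSpace ℝ (Fin d) => g (x - y)) =
      (Metric.closedBall x r).indicator (fun y => ‖x - y‖ ^ (-((d : ℝ) - 2))) := by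
    funext y
    have hmem : x - y ∈ Metric.closedBall (0 : EuclideanSpace ℝ (Fin d)) r ↔ y ∈ Metric.closedBall x r := by
      simp [Metric.mem_closedBall, dist_eq_norm, norm_sub_rev]
    by_cases hy : y ∈ Metric.closedBall x r
    · rw [Set.indicator_of_mem hy, hg, Set.indicator_of_mem (hmem.mpr hy)]
    · rw [Set.indicator_of_notMem hy, hg, Set.indicator_of_notMem (fun h => hy (hmem.mp h))]
  have := hgint.comp_sub_left x
  rw [h2] at this
  exact (integrable_indicator_iff measurableSet_closedBall).mp this

lemma riesz_integral_sub_eq (d : ℕ) (x : EuclideanSpace ℝ (Fin d)) (r : ℝ) :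
    ∫ y in Metric.closedBall x r, ‖x - y‖ ^ (-((d : ℝ) - 2))
      = ∫ w in Metric.closedBall (0 : EuclideanSpace ℝ (Fin d)) r, ‖w‖ ^ (-((d : ℝ) - 2)) := by
  set g : EuclideanSpace ℝ (Fin d) → ℝ := (Metric.closedBall (0 : EuclideanSpace ℝ (Fin d)) r).indicator
      (fun w => ‖w‖ ^ (-((d : ℝ) - 2))) with hg
  have h2 : (fun y : EuclideanSpace ℝ (Fin d) => g (x - y)) =
      (Metric.closedBall x r).indicator (fun y => ‖x - y‖ ^ (-((d : ℝ) - 2))) := by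
    funext y
    have hmem : x - y ∈ Metric.closedBall (0 : EuclideanSpace ℝ (Fin d)) r ↔ y ∈ Metric.closedBall x r := by
      simp [Metric.mem_closedBall, dist_eq_norm, norm_sub_rev]
    by_cases hy : y ∈ Metric.closedBall x r
    · rw [Set.indicator_of_mem hy, hg, Set.indicator_of_mem (hmem.mpr hy)]
    · rw [Set.indicator_of_notMem hy, hg, Set.indicator_of_notMem (fun h => hy (hmem.mp h))]
  calc ∫ y in Metric.closedBall x r, ‖x - y‖ ^ (-((d : ℝ) - 2))
      = ∫ y, (Metric.closedBall x r).indicator (fun y => ‖x - y‖ ^ (-((d : ℝ) - 2))) y := by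
        rw [integral_indicator measurableSet_closedBall]
    _ = ∫ y, g (x - y) := by rw [h2]
    _ = ∫ w, g w := integral_sub_left_eq_self g volume x
    _ = _ := by rw [hg, integral_indicator measurableSet_closedBall]

/-- Convolution with the Green function of `(1/2d)Δ` on `ℝ^d`. -/
noncomputable def greenPotential (d : ℕ) (f : EuclideanSpace ℝ (Fin d) → ℝ)
    (x : EuclideanSpace ℝ (Fin d)) : ℝ :=
  ∫ y, ((d : ℝ) / (2 * Real.pi ^ ((d : ℝ) / 2)) * Real.Gamma ((d : ℝ) / 2 - 1))
      * ‖x - y‖ ^ (-((d : ℝ) - 2)) * f y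

theorem lagrange_multiplier_two_sided_bound
    (d : ℕ) (hd : 3 ≤ d)
    (D : Set (EuclideanSpace ℝ (Fin d))) (hDmeas : MeasurableSet D)
    (hDcompact : IsCompact D) (hDpos : volume D ≠ 0)
    (eta : ℝ → ℝ) (heta : ContDiff ℝ 1 eta)
    (K : ℝ) (hK : ∀ x : ℝ, |deriv eta x| ≤ K)
    (u : ℝ) (hu : 0 < u)
    (m : ℝ) (hm : 0 < m) (hminf : ∀ x : ℝ, Real.sqrt u ≤ x → m ≤ deriv eta x)
    (lam : ℝ) (hlam : 0 < lam)
    (φ : EuclideanSpace ℝ (Fin d) → ℝ) (hφmeas : Measurable φ) (hφpos : ∀ x, 0 ≤ φ x)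
    (heq : ∀ x, φ x = lam *
      greenPotential d (D.indicator fun y => deriv eta (Real.sqrt u + φ y)) x)
    (ν θ0 : ℝ)
    (hνθ : ν - θ0 =
      (volume D).toReal⁻¹ * ∫ z in D, (eta (Real.sqrt u + φ z) - eta (Real.sqrt u))) :
    (K ^ 2 * ((volume D).toReal⁻¹ *
        ∫ z in D, greenPotential d (D.indicator fun _ => (1:ℝ)) z))⁻¹ * (ν - θ0) ≤ lam ∧
    lam ≤ (m ^ 2 * ((volume D).toReal⁻¹ *
        ∫ z in D, greenPotential d (D.indicator fun _ => (1:ℝ)) z))⁻¹ * (ν - θ0) := by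
  have hd3 : (3 : ℝ) ≤ (d : ℝ) := by exact_mod_cast hd
  set c : ℝ := (d : ℝ) / (2 * Real.pi ^ ((d : ℝ) / 2)) * Real.Gamma ((d : ℝ) / 2 - 1) with hc
  have hcpos : 0 < c := by
    apply mul_pos
    · apply div_pos (by linarith)
      positivity
    · exact Real.Gamma_pos_of_pos (by linarith)
  set k : EuclideanSpace ℝ (Fin d) → EuclideanSpace ℝ (Fin d) → ℝ := fun x y => c * ‖x - y‖ ^ (-((d : ℝ) - 2)) with hk
  have hknn : ∀ x y : EuclideanSpace ℝ (Fin d), 0 ≤ k x y := fun x y => by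
    exact mul_nonneg hcpos.le (Real.rpow_nonneg (norm_nonneg _) _)
  have hkpos : ∀ x y : EuclideanSpace ℝ (Fin d), y ≠ x → 0 < k x y := fun x y hxy => by
    apply mul_pos hcpos
    apply Real.rpow_pos_of_pos
    rw [norm_pos_iff, sub_ne_zero]
    exact fun h => hxy h.symm
  have hkmeas : ∀ x : EuclideanSpace ℝ (Fin d), Measurable (k x) := fun x => by
    apply Measurable.const_mul
    fun_prop
  -- D is bounded
  obtain ⟨R₀, hDR₀⟩ := hDcompact.isBounded.subset_closedBall 0
  set R : ℝ := max R₀ 0 with hR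
  have hR0 : 0 ≤ R := le_max_right _ _
  have hDR : D ⊆ Metric.closedBall (0 : EuclideanSpace ℝ (Fin d)) R :=
    hDR₀.trans (Metric.closedBall_subset_closedBall (le_max_left _ _))
  -- base integrability of the kernel over D
  have hbaseD : ∀ x : EuclideanSpace ℝ (Fin d), IntegrableOn (k x) D volume := by
    intro x
    apply Integrable.const_mul
    have hsub : D ⊆ Metric.closedBall x (‖x‖ + R) := by
      intro y hy
      rw [Metric.mem_closedBall, dist_comm, dist_eq_norm]
      calc ‖x - y‖ ≤ ‖x‖ + ‖y‖ := norm_sub_le _ _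
        _ ≤ ‖x‖ + R := by
            have := hDR hy
            rw [Metric.mem_closedBall, dist_zero_right] at this
            linarith
    exact (riesz_integrableOn_sub d hd x (‖x‖ + R)).mono_set hsub
  have hbase : ∀ x : EuclideanSpace ℝ (Fin d), Integrable (D.indicator (k x)) volume := fun x =>
    (integrable_indicator_iff hDmeas).mpr (hbaseD x)
  -- G1 : the green potential of the indicator of D
  set G1 : EuclideanSpace ℝ (Fin d) → ℝ := fun z => greenPotential d (D.indicator fun _ => (1:ℝ)) z with hG1
  have hG1eq : ∀ z : EuclideanSpace ℝ (Fin d), G1 z = ∫ y, D.indicator (k z) y := by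
    intro z
    show (greenPotential d (D.indicator fun _ => (1:ℝ)) z) = _
    unfold greenPotential
    rw [← hc]
    congr 1
    funext y
    by_cases hy : y ∈ D
    · rw [Set.indicator_of_mem hy, Set.indicator_of_mem hy, mul_one]
    · rw [Set.indicator_of_notMem hy, Set.indicator_of_notMem hy, mul_zero]
      -- goal closed
  have hG1eq' : ∀ z : EuclideanSpace ℝ (Fin d), G1 z = ∫ y in D, k z y := by
    intro z; rw [hG1eq z, integral_indicator hDmeas]
  have hG1nn : ∀ z : EuclideanSpace ℝ (Fin d), 0 ≤ G1 z := by
    intro z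
    rw [hG1eq' z]
    exact setIntegral_nonneg hDmeas fun y _ => hknn z y
  have hG1pos : ∀ z : EuclideanSpace ℝ (Fin d), 0 < G1 z := by
    intro z
    rw [hG1eq' z]
    rw [setIntegral_pos_iff_support_of_nonneg_ae
      (Eventually.of_forall fun y => hknn z y) (hbaseD z)]
    have hsub : D \ {z} ⊆ Function.support (k z) ∩ D := by
      intro y hy
      exact ⟨(hkpos z y hy.2).ne', hy.1⟩
    calc (0 : ℝ≥0∞) < volume D := by
          rwa [pos_iff_ne_zero]
      _ = volume (D \ {z}) := by
          have hsing : volume ({z} : Set (EuclideanSpace ℝ (Fin d))) = 0 := by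
            have hsub0 : ({z} : Set (EuclideanSpace ℝ (Fin d))) ⊆ Metric.closedBall z 0 := by
              simp
            refine measure_mono_null hsub0 ?_
            rw [Measure.addHaar_closedBall _ _ le_rfl]
            rw [finrank_euclideanSpace_fin]
            rw [zero_pow (by omega : d ≠ 0)]
            simp
          exact (measure_diff_null hsing).symm
      _ ≤ volume (Function.support (k z) ∩ D) := measure_mono hsub
  -- basic facts about eta
  have hetadiff : Differentiable ℝ eta := heta.differentiable one_ne_zero
  have hetaderiv : Continuous (deriv eta) := heta.continuous_deriv le_rfl
  have hKm : m ≤ K := le_trans (hminf _ le_rfl) (le_trans (le_abs_self _) (hK _))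
  have hKpos : 0 < K := lt_of_lt_of_le hm hKm
  -- mean value bounds
  have hMVTub : ∀ a b : ℝ, a ≤ b → eta b - eta a ≤ K * (b - a) := by
    intro a b hab
    have hmono : Monotone (fun x => K * x - eta x) := by
      apply monotone_of_deriv_nonneg
      · exact (differentiable_id.const_mul K).sub hetadiff
      · intro x
        have hd1 : HasDerivAt (fun x => K * x - eta x) (K * 1 - deriv eta x) x :=
          ((hasDerivAt_id x).const_mul K).sub (hetadiff x).hasDerivAt
        rw [hd1.deriv]
        have := le_trans (le_abs_self _) (hK x)
        linarith
    have := hmono hab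
    simp only at this
    linarith
  have hMVTlb : ∀ a b : ℝ, Real.sqrt u ≤ a → a ≤ b → m * (b - a) ≤ eta b - eta a := by
    intro a b ha hab
    have hmono : MonotoneOn (fun x => eta x - m * x) (Ici (Real.sqrt u)) := by
      apply monotoneOn_of_deriv_nonneg (convex_Ici _)
      · exact (hetadiff.sub (differentiable_id.const_mul m)).continuous.continuousOn
      · exact ((hetadiff.sub (differentiable_id.const_mul m)).differentiableOn)
      · intro x hx
        rw [interior_Ici] at hx
        have hd1 : HasDerivAt (fun x => eta x - m * x) (deriv eta x - m * 1) x :=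
          (hetadiff x).hasDerivAt.sub ((hasDerivAt_id x).const_mul m)
        rw [hd1.deriv]
        have := hminf x (le_of_lt hx)
        linarith
    have := hmono (mem_Ici.mpr ha) (mem_Ici.mpr (le_trans ha hab)) hab
    simp only at this
    linarith
  -- pointwise comparison of the green potentials
  have hφbounds : ∀ z : EuclideanSpace ℝ (Fin d),
      lam * (m * G1 z) ≤ φ z ∧ φ z ≤ lam * (K * G1 z) := by
    intro z
    set F : EuclideanSpace ℝ (Fin d) → ℝ :=
      D.indicator (fun y => k z y * deriv eta (Real.sqrt u + φ y)) with hF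
    have hGfeq : greenPotential d (D.indicator fun y => deriv eta (Real.sqrt u + φ y)) z
        = ∫ y, F y := by
      unfold greenPotential
      rw [← hc]
      congr 1
      funext y
      by_cases hy : y ∈ D
      · rw [Set.indicator_of_mem hy, hF, Set.indicator_of_mem hy]
      · rw [Set.indicator_of_notMem hy, hF, Set.indicator_of_notMem hy, mul_zero]
    have hFlb : ∀ y, m * D.indicator (k z) y ≤ F y := by
      intro y
      by_cases hy : y ∈ D
      · rw [hF, Set.indicator_of_mem hy, Set.indicator_of_mem hy, mul_comm m (k z y)]
        exact mul_le_mul_of_nonneg_left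
          (hminf _ (le_add_of_nonneg_right (hφpos y))) (hknn z y)
      · rw [hF, Set.indicator_of_notMem hy, Set.indicator_of_notMem hy, mul_zero]
    have hFub : ∀ y, F y ≤ K * D.indicator (k z) y := by
      intro y
      by_cases hy : y ∈ D
      · rw [hF, Set.indicator_of_mem hy, Set.indicator_of_mem hy, mul_comm K (k z y)]
        exact mul_le_mul_of_nonneg_left
          (le_trans (le_abs_self _) (hK _)) (hknn z y)
      · rw [hF, Set.indicator_of_notMem hy, Set.indicator_of_notMem hy, mul_zero]
    have hFnn : ∀ y, 0 ≤ F y := by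
      intro y
      refine le_trans ?_ (hFlb y)
      exact mul_nonneg hm.le (Set.indicator_nonneg (fun y _ => hknn z y) y)
    have hFmeas : Measurable F := by
      apply Measurable.indicator _ hDmeas
      exact (hkmeas z).mul (hetaderiv.measurable.comp (measurable_const.add hφmeas))
    have hFint : Integrable F volume := by
      refine Integrable.mono' ((hbase z).const_mul K) hFmeas.aestronglyMeasurable ?_
      refine Eventually.of_forall fun y => ?_
      rw [Real.norm_eq_abs, abs_of_nonneg (hFnn y)]
      exact hFub y
    have hIlb : m * G1 z ≤ ∫ y, F y := by
      rw [hG1eq z, ← integral_const_mul]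
      exact integral_mono ((hbase z).const_mul m) hFint hFlb
    have hIub : (∫ y, F y) ≤ K * G1 z := by
      rw [hG1eq z, ← integral_const_mul]
      exact integral_mono hFint ((hbase z).const_mul K) hFub
    constructor
    · rw [heq z, hGfeq]
      exact mul_le_mul_of_nonneg_left hIlb hlam.le
    · rw [heq z, hGfeq]
      exact mul_le_mul_of_nonneg_left hIub hlam.le
  -- combined pointwise bounds on the nonlinearity
  have hcomb : ∀ z : EuclideanSpace ℝ (Fin d),
      lam * m ^ 2 * G1 z ≤ eta (Real.sqrt u + φ z) - eta (Real.sqrt u) ∧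
      eta (Real.sqrt u + φ z) - eta (Real.sqrt u) ≤ lam * K ^ 2 * G1 z := by
    intro z
    obtain ⟨hlb, hub⟩ := hφbounds z
    have h1 : m * φ z ≤ eta (Real.sqrt u + φ z) - eta (Real.sqrt u) := by
      have := hMVTlb (Real.sqrt u) (Real.sqrt u + φ z) le_rfl
        (le_add_of_nonneg_right (hφpos z))
      simpa using this
    have h2 : eta (Real.sqrt u + φ z) - eta (Real.sqrt u) ≤ K * φ z := by
      have := hMVTub (Real.sqrt u) (Real.sqrt u + φ z)
        (le_add_of_nonneg_right (hφpos z))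
      simpa using this
    constructor
    · nlinarith [hφpos z, hG1nn z]
    · nlinarith [hφpos z, hG1nn z]
  -- measurability of G1
  have hG1sm : StronglyMeasurable G1 := by
    have hpair : StronglyMeasurable
        (fun q : EuclideanSpace ℝ (Fin d) × EuclideanSpace ℝ (Fin d) =>
          c * ‖q.1 - q.2‖ ^ (-((d : ℝ) - 2)) * D.indicator (fun _ => (1:ℝ)) q.2) := by
      apply Measurable.stronglyMeasurable
      apply Measurable.mul
      · apply Measurable.const_mul
        fun_prop
      · exact (measurable_const.indicator hDmeas).comp measurable_snd
    have hrepr : G1 = fun z => ∫ y,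
        (fun q : EuclideanSpace ℝ (Fin d) × EuclideanSpace ℝ (Fin d) =>
          c * ‖q.1 - q.2‖ ^ (-((d : ℝ) - 2)) * D.indicator (fun _ => (1:ℝ)) q.2) (z, y) := by
      funext z
      show greenPotential d (D.indicator fun _ => (1:ℝ)) z = _
      unfold greenPotential
      rw [← hc]
    rw [hrepr]
    exact hpair.integral_prod_right'
  -- uniform bound for G1 on D
  set I0 : ℝ := ∫ w in Metric.closedBall (0 : EuclideanSpace ℝ (Fin d)) (2*R),
      ‖w‖ ^ (-((d : ℝ) - 2)) with hI0
  have hG1bdd : ∀ z ∈ D, G1 z ≤ c * I0 := by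
    intro z hz
    have hzR : ‖z‖ ≤ R := by
      have := hDR hz
      rwa [Metric.mem_closedBall, dist_zero_right] at this
    have hDsub : D ⊆ Metric.closedBall z (2*R) := by
      intro y hy
      have hyR : ‖y‖ ≤ R := by
        have := hDR hy
        rwa [Metric.mem_closedBall, dist_zero_right] at this
      rw [Metric.mem_closedBall, dist_eq_norm]
      calc ‖y - z‖ ≤ ‖y‖ + ‖z‖ := norm_sub_le _ _
        _ ≤ 2 * R := by linarith
    have h1 : G1 z = c * ∫ y in D, ‖z - y‖ ^ (-((d : ℝ) - 2)) := by
      rw [hG1eq' z]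
      simp only [hk]
      rw [integral_const_mul]
    rw [h1]
    refine mul_le_mul_of_nonneg_left ?_ hcpos.le
    calc ∫ y in D, ‖z - y‖ ^ (-((d : ℝ) - 2))
        ≤ ∫ y in Metric.closedBall z (2*R), ‖z - y‖ ^ (-((d : ℝ) - 2)) := by
          refine setIntegral_mono_set (riesz_integrableOn_sub d hd z (2*R))
            (Eventually.of_forall fun y => Real.rpow_nonneg (norm_nonneg _) _)
            (HasSubset.Subset.eventuallyLE hDsub)
      _ = I0 := riesz_integral_sub_eq d z (2*R)
  -- integrability of G1 on D
  have hG1intD : IntegrableOn G1 D volume := by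
    refine Measure.integrableOn_of_bounded hDcompact.measure_lt_top.ne
      hG1sm.aestronglyMeasurable (M := c * I0) ?_
    rw [ae_restrict_iff' hDmeas]
    refine Eventually.of_forall fun z hz => ?_
    rw [Real.norm_eq_abs, abs_of_nonneg (hG1nn z)]
    exact hG1bdd z hz
  -- the nonlinearity on D
  set F2 : EuclideanSpace ℝ (Fin d) → ℝ :=
    fun z => eta (Real.sqrt u + φ z) - eta (Real.sqrt u) with hF2
  have hF2meas : Measurable F2 :=
    (heta.continuous.measurable.comp (measurable_const.add hφmeas)).sub measurable_const
  have hF2int : IntegrableOn F2 D volume := by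
    refine Integrable.mono' (hG1intD.const_mul (lam * K ^ 2))
      hF2meas.aestronglyMeasurable ?_
    refine Eventually.of_forall fun z => ?_
    simp only [hF2]
    rw [Real.norm_eq_abs, abs_le]
    obtain ⟨h1, h2⟩ := hcomb z
    constructor
    · nlinarith [mul_nonneg (mul_nonneg hlam.le (sq_nonneg K)) (hG1nn z),
        mul_nonneg (mul_nonneg hlam.le (sq_nonneg m)) (hG1nn z)]
    · exact h2
  -- integral comparisons over D
  have hIntlb : lam * m ^ 2 * ∫ z in D, G1 z ≤ ∫ z in D, F2 z := by
    rw [← integral_const_mul]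
    exact setIntegral_mono_on (hG1intD.const_mul (lam * m ^ 2)) hF2int hDmeas
      fun z _ => (hcomb z).1
  have hIntub : (∫ z in D, F2 z) ≤ lam * K ^ 2 * ∫ z in D, G1 z := by
    rw [← integral_const_mul]
    exact setIntegral_mono_on hF2int (hG1intD.const_mul (lam * K ^ 2)) hDmeas
      fun z _ => (hcomb z).2
  -- positivity of the averaged green potential
  have hJpos : 0 < ∫ z in D, G1 z := by
    rw [setIntegral_pos_iff_support_of_nonneg_ae (Eventually.of_forall hG1nn) hG1intD]
    have hsub : D ⊆ Function.support G1 ∩ D := fun z hz => ⟨(hG1pos z).ne', hz⟩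
    exact lt_of_lt_of_le (pos_iff_ne_zero.mpr hDpos) (measure_mono hsub)
  have hV : 0 < (volume D).toReal :=
    ENNReal.toReal_pos hDpos hDcompact.measure_lt_top.ne
  have hgoalJ : (∫ z in D, greenPotential d (D.indicator fun _ => (1:ℝ)) z)
      = ∫ z in D, G1 z := rfl
  rw [hgoalJ]
  set J : ℝ := ∫ z in D, G1 z with hJ
  set V : ℝ := (volume D).toReal with hVdef
  have hA : 0 < V⁻¹ * J := mul_pos (inv_pos.mpr hV) hJpos
  have hνθ' : ν - θ0 = V⁻¹ * ∫ z in D, F2 z := hνθ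
  have hup : ν - θ0 ≤ lam * K ^ 2 * (V⁻¹ * J) := by
    rw [hνθ']
    calc V⁻¹ * ∫ z in D, F2 z ≤ V⁻¹ * (lam * K ^ 2 * J) :=
          mul_le_mul_of_nonneg_left hIntub (inv_nonneg.mpr hV.le)
      _ = lam * K ^ 2 * (V⁻¹ * J) := by ring
  have hlo : lam * m ^ 2 * (V⁻¹ * J) ≤ ν - θ0 := by
    rw [hνθ']
    calc lam * m ^ 2 * (V⁻¹ * J) = V⁻¹ * (lam * m ^ 2 * J) := by ring
      _ ≤ V⁻¹ * ∫ z in D, F2 z :=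
          mul_le_mul_of_nonneg_left hIntlb (inv_nonneg.mpr hV.le)
  have hKA : 0 < K ^ 2 * (V⁻¹ * J) := mul_pos (pow_pos hKpos 2) hA
  have hmA : 0 < m ^ 2 * (V⁻¹ * J) := mul_pos (pow_pos hm 2) hA
  constructor
  · rw [inv_mul_le_iff₀ hKA]
    exact hup.trans (le_of_eq (by ring))
  · rw [le_inv_mul_iff₀ hmA]
    exact (le_of_eq (by ring : m ^ 2 * (V⁻¹ * J) * lam = lam * m ^ 2 * (V⁻¹ * J))).trans hlo
end
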